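/- For every nonempty area sequence w of size n with bounce sequence b_1 … b_n, we have |Maxa(ψ(w))| = w_n − b_n, where for a nonempty area sequence v with maximum value m, Maxa(v) = { i : v_i = m − 1 and v_j < m for all j > i }. -/

import Mathlib

/-- The `i`-th letter of the word `w` (`1`-indexed, as in the paper);
defaults to `0` out of range. -/
def get1 (w : List ℕ) (i : ℕ) : ℕ := w.getD (i - 1) 0

/-- `w` is the area sequence of a Dyck path: the first letter is `0` and each
letter exceeds the previous one by at most one. -/
def IsAreaSeq (w : List ℕ) : Prop :=
  (w ≠ [] → get1 w 1 = 0) ∧ ∀ i, 1 ≤ i → i < w.length → get1 w (i + 1) ≤ get1 w i + 1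

/-- Insertion at position `i` (for `0 ≤ i ≤ n`): `ins w 0` prepends a `0`, and
for `1 ≤ i ≤ n`, `ins w i` inserts the letter `w_i + 1` just after position `i`. -/
def ins (w : List ℕ) (i : ℕ) : List ℕ :=
  w.take i ++ (if i = 0 then 0 else get1 w i + 1) :: w.drop i

/-- The area statistic: the sum of the letters. -/
def area (w : List ℕ) : ℕ := w.sum

/-- The dinv statistic: `dinv w = Σ_i d_i` where `d_i` is the number of `j > i`
with `w_j = w_i` or `w_j = w_i - 1`. -/
def dinv (w : List ℕ) : ℕ :=
  ∑ i ∈ Finset.Icc 1 w.length,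
    ((Finset.Ioc i w.length).filter
      (fun j => get1 w j = get1 w i ∨ get1 w j + 1 = get1 w i)).card

/-- The maximal value of a word (`0` for the empty word). -/
def maxVal (w : List ℕ) : ℕ := w.foldr max 0

/-- Positions of the letters of maximal value `m`. -/
def Maxb (w : List ℕ) : Finset ℕ :=
  (Finset.Icc 1 w.length).filter (fun i => get1 w i = maxVal w)

/-- Positions `i` with `w_i = m - 1` such that all letters after position `i`
are `< m`. -/
def Maxa (w : List ℕ) : Finset ℕ :=
  (Finset.Icc 1 w.length).filter (fun i =>
    get1 w i + 1 = maxVal w ∧ ∀ j ∈ Finset.Ioc i w.length, get1 w j < maxVal w)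

/-- The position of the leftmost letter equal to the maximal value `m` in the
rightmost block of consecutive letters equal to `m`. -/
def i0 (w : List ℕ) : ℕ :=
  ((Finset.Icc 1 w.length).filter (fun i =>
    get1 w i = maxVal w ∧ (i = 1 ∨ get1 w (i - 1) ≠ maxVal w))).sup id

/-- The admissible insertion positions of `w`, listed in admissible order:
the elements of `Maxb w` in decreasing order, then the elements of `Maxa w`
in decreasing order, then `i0 w - 1`.  The empty word has the single
admissible insertion position `0`. -/
def admissible (w : List ℕ) : List ℕ :=
  if w = [] then [0]
  else ((Maxb w).sort (· ≤ ·)).reverse ++ ((Maxa w).sort (· ≤ ·)).reverse ++ [i0 w - 1]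

/-- Auxiliary version of the map `ψ`, reading the reversed word. -/
def psiRev : List ℕ → List ℕ
  | [] => []
  | a :: u => ins (psiRev u) ((admissible (psiRev u)).getD a 0)

/-- The map `ψ`: `ψ(ε) = ε` and `ψ(u a) = ins_{c_a}(ψ(u))` where
`c_0, c_1, …, c_k` are the admissible insertion positions of `ψ(u)` in
admissible order. -/
def psi (w : List ℕ) : List ℕ := psiRev w.reverse

/-- The bounce sequence: `b_1 = 0`, and `b_i = b_{i-1} + 1` if
`b_{i-1} + 1 ≤ w_i`, otherwise `b_i = 0`. -/
def bseq (w : List ℕ) : ℕ → ℕ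
  | 0 => 0
  | 1 => 0
  | (i + 2) => if bseq w (i + 1) + 1 ≤ get1 w (i + 2) then bseq w (i + 1) + 1 else 0

/-- The bounces of `w`: positions `1 < i ≤ n` with `b_i = 0`. -/
def bounces (w : List ℕ) : Finset ℕ :=
  (Finset.Icc 2 w.length).filter (fun i => bseq w i = 0)

/-- The bounce statistic: the sum of the reversed positions `n - i + 1` of the
bounces of `w`. -/
def bounce (w : List ℕ) : ℕ := ∑ i ∈ bounces w, (w.length - i + 1)

/-!
Induct on `w`, appending one letter `x`; the invariant is that `ψ(w)` has `b_n + 1` maximal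
letters and `w_n - b_n` letters in `Maxa`. Write `m` for the maximum of `v = ψ(u)`, `B = |Maxb v|`
and `A = |Maxa v|`, so `x ≤ w_n + 1 = B + A`. The letters of `Maxa v` are the letters `m - 1` to the
right of the last `m`, and the admissible order makes the `x`-th position decisive:
* `x < B`: a new maximum `m + 1` is inserted right after the `(x + 1)`-st maximal letter counted
  from the right; the `x` old maxima to its right form the new `Maxa`.
* `B ≤ x < B + A`: a letter `m` is inserted after a position of `Maxa v` and becomes the last
  maximum; the `x - B` positions of `Maxa v` to its right form the new `Maxa`.
* `x = B + A`: a letter `m` is inserted in front of the last block of maxima (for an area sequence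
  the letter before that block is `m - 1`), so `Maxa` keeps its size `A = x - B`.
Thus `(B, A)` becomes `(1, x)` or `(B + 1, x - B)`, which is the recursion of the bounce sequence.
-/

open Finset

lemma le_maxVal_of_mem {l : List ℕ} {x : ℕ} (h : x ∈ l) : x ≤ maxVal l :=
  List.le_max_of_le h le_rfl

lemma maxVal_mem {l : List ℕ} (h : l ≠ []) : maxVal l ∈ l :=
  List.maximum_mem (List.foldr_max_of_ne_nil h).symm

lemma List.Perm.maxVal_eq {l l' : List ℕ} (h : l.Perm l') : maxVal l = maxVal l' :=
  h.foldr_eq 0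

lemma get1_le_maxVal (v : List ℕ) (i : ℕ) : get1 v i ≤ maxVal v := by
  rw [get1, List.getD_eq_getElem?_getD]
  cases h : v[i - 1]? with
  | none => exact Nat.zero_le _
  | some x => exact le_maxVal_of_mem (List.mem_of_getElem? h)

lemma get1_cons_succ (a : ℕ) (t : List ℕ) {i : ℕ} (hi : 1 ≤ i) :
    get1 (a :: t) (i + 1) = get1 t i := by
  obtain ⟨j, rfl⟩ : ∃ j, i = j + 1 := ⟨i - 1, by omega⟩
  rfl

lemma card_filter_Ioc_get1 (p : ℕ → Prop) [DecidablePred p] (v : List ℕ) (c : ℕ) :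
    #{i ∈ Ioc c v.length | p (get1 v i)} = (v.drop c).countP (fun x => decide (p x)) := by
  induction v generalizing c with
  | nil => simp
  | cons a t ih =>
    have shift (c : ℕ) : #{i ∈ Ioc (c + 1) (t.length + 1) | p (get1 (a :: t) i)} =
        #{i ∈ Ioc c t.length | p (get1 t i)} := by
      rw [← map_add_right_Ioc, filter_map, card_map]
      congr 1
      refine filter_congr fun i hi => ?_
      simp [get1_cons_succ a t (Nat.one_le_of_lt (mem_Ioc.mp hi).1)]
    cases c with
    | zero =>
      rw [List.length_cons, ← Icc_add_one_left_eq_Ioc, ← Ioc_insert_left (by omega),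
        filter_insert]
      by_cases ha : p a
      · rw [if_pos (show p (get1 (a :: t) (0 + 1)) from ha), card_insert_of_notMem (by simp), shift, ih]
        simp [ha]
      · rw [if_neg (show ¬p (get1 (a :: t) (0 + 1)) from ha), shift, ih]
        simp [ha]
    | succ c => rw [List.length_cons, shift, ih, List.drop_succ_cons]

lemma mem_Maxb {v : List ℕ} {i : ℕ} :
    i ∈ Maxb v ↔ (1 ≤ i ∧ i ≤ v.length) ∧ get1 v i = maxVal v := by
  rw [Maxb, mem_filter, mem_Icc]

lemma Maxb_nonempty {v : List ℕ} (h : v ≠ []) : (Maxb v).Nonempty := by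
  obtain ⟨k, hk, he⟩ := List.getElem_of_mem (maxVal_mem h)
  exact ⟨k + 1, mem_Maxb.mpr ⟨⟨by omega, hk⟩, by simp [get1, List.getElem?_eq_getElem hk, he]⟩⟩

lemma card_filter_Maxb_lt (v : List ℕ) (c : ℕ) :
    #{i ∈ Maxb v | c < i} = (v.drop c).count (maxVal v) := by
  have : {i ∈ Maxb v | c < i} = {i ∈ Ioc c v.length | get1 v i = maxVal v} := by
    ext i; simp only [mem_filter, mem_Maxb, mem_Ioc]; omega
  rw [this, card_filter_Ioc_get1 (· = maxVal v), List.count_eq_countP]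
  exact List.countP_congr fun x _ => by simp

lemma card_Maxb (v : List ℕ) : #(Maxb v) = v.count (maxVal v) := by
  have hpos : ∀ i ∈ Maxb v, 0 < i := fun i hi => (mem_Maxb.mp hi).1.1
  have h := card_filter_Maxb_lt v 0
  rwa [filter_true_of_mem hpos, List.drop_zero] at h

def insLetter (v : List ℕ) (c : ℕ) : ℕ := if c = 0 then 0 else get1 v c + 1

lemma ins_eq (v : List ℕ) (c : ℕ) : ins v c = v.take c ++ insLetter v c :: v.drop c := rfl

lemma ins_perm (v : List ℕ) (c : ℕ) : (ins v c).Perm (insLetter v c :: v) := by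
  simpa only [ins_eq, List.take_append_drop] using
    (List.perm_middle (a := insLetter v c) (l₁ := v.take c) (l₂ := v.drop c))

lemma length_ins (v : List ℕ) (c : ℕ) : (ins v c).length = v.length + 1 :=
  (ins_perm v c).length_eq

lemma ins_ne_nil (v : List ℕ) (c : ℕ) : ins v c ≠ [] :=
  List.ne_nil_of_length_pos (by rw [length_ins]; omega)

lemma maxVal_ins (v : List ℕ) (c : ℕ) : maxVal (ins v c) = max (insLetter v c) (maxVal v) :=
  (ins_perm v c).maxVal_eq

lemma count_ins (v : List ℕ) (c y : ℕ) :
    (ins v c).count y = v.count y + if insLetter v c = y then 1 else 0 := by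
  rw [(ins_perm v c).count_eq, List.count_cons]
  simp

section ins

variable {v : List ℕ} {c : ℕ} (hc : c ≤ v.length)
include hc

lemma get1_ins_of_le {j : ℕ} (hj : 1 ≤ j) (hjc : j ≤ c) : get1 (ins v c) j = get1 v j := by
  simp only [get1, ins_eq, List.getD_eq_getElem?_getD]
  rw [List.getElem?_append_left (by simp; omega), List.getElem?_take_of_lt (by omega)]

lemma get1_ins_succ : get1 (ins v c) (c + 1) = insLetter v c := by
  simp only [get1, ins_eq, List.getD_eq_getElem?_getD]
  rw [List.getElem?_append_right (by simp)]
  simp [Nat.min_eq_left hc]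

lemma get1_ins_of_lt {j : ℕ} (hj : c + 1 < j) : get1 (ins v c) j = get1 v (j - 1) := by
  simp only [get1, ins_eq, List.getD_eq_getElem?_getD]
  rw [List.getElem?_append_right (by simp; omega)]
  simp [show j - 1 - min c v.length = j - 1 - 1 - c + 1 by omega]
  congr 2; omega

lemma drop_ins {k : ℕ} (hk : c ≤ k) : (ins v c).drop (k + 1) = v.drop k := by
  rw [ins_eq, List.drop_append, List.length_take_of_le hc, List.drop_eq_nil_of_le (by simp; omega),
    List.nil_append, show k + 1 - c = k - c + 1 by omega, List.drop_succ_cons, List.drop_drop,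
    Nat.add_sub_cancel' hk]

end ins

lemma IsAreaSeq.ins {v : List ℕ} (hv : IsAreaSeq v) {c : ℕ} (hc : c ≤ v.length) :
    IsAreaSeq (ins v c) := by
  obtain ⟨hfirst, hstep⟩ := hv
  refine ⟨fun _ => ?_, fun i hi hin => ?_⟩
  · rcases Nat.eq_zero_or_pos c with rfl | hc0
    · exact get1_ins_succ hc
    · rw [get1_ins_of_le hc le_rfl hc0]
      exact hfirst (List.ne_nil_of_length_pos (by omega))
  rw [length_ins] at hin
  rcases lt_trichotomy i c with hic | rfl | hci
  · rw [get1_ins_of_le hc (by omega) hic, get1_ins_of_le hc hi hic.le]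
    exact hstep i hi (by omega)
  · rw [get1_ins_succ hc, get1_ins_of_le hc hi le_rfl, insLetter, if_neg (by omega)]
  rcases (show c + 1 ≤ i from hci).eq_or_lt with rfl | hci'
  · rw [get1_ins_of_lt hc (by omega), get1_ins_succ hc, Nat.add_sub_cancel, insLetter]
    split_ifs with h0
    · subst h0
      rw [hfirst (List.ne_nil_of_length_pos (by omega))]
      omega
    · have := hstep c (by omega) (by omega)
      omega
  · rw [get1_ins_of_lt hc (by omega), get1_ins_of_lt hc (by omega),
      show i + 1 - 1 = i - 1 + 1 by omega]
    exact hstep (i - 1) (by omega) (by omega)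

def lastMaxPos (v : List ℕ) : ℕ := (Maxb v).sup id

section lastMaxPos

variable {v : List ℕ}

lemma lastMaxPos_mem (h : v ≠ []) : lastMaxPos v ∈ Maxb v := by
  obtain ⟨i, hi, he⟩ := exists_mem_eq_sup _ (Maxb_nonempty h) id
  rw [lastMaxPos, he]
  exact hi

lemma le_lastMaxPos {i : ℕ} (hi : i ∈ Maxb v) : i ≤ lastMaxPos v :=
  le_sup (f := id) hi

lemma get1_lt_maxVal_of_lastMaxPos_lt {j : ℕ} (hj : lastMaxPos v < j) (hjn : j ≤ v.length) :
    get1 v j < maxVal v := by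
  refine (get1_le_maxVal v j).lt_of_ne fun he => ?_
  have := le_lastMaxPos (mem_Maxb.mpr ⟨⟨by omega, hjn⟩, he⟩)
  omega

lemma lastMaxPos_eq {L : ℕ} (hL : L ∈ Maxb v)
    (hafter : ∀ j, L < j → j ≤ v.length → get1 v j ≠ maxVal v) : lastMaxPos v = L := by
  have hv : v ≠ [] := List.ne_nil_of_length_pos (by have := mem_Maxb.mp hL; omega)
  obtain ⟨⟨-, hLn⟩, hLm⟩ := mem_Maxb.mp (lastMaxPos_mem hv)
  by_contra hne
  exact hafter _ (lt_of_le_of_ne (le_lastMaxPos hL) (Ne.symm hne)) hLn hLm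

lemma Maxa_eq (h : v ≠ []) :
    Maxa v = {i ∈ Ioc (lastMaxPos v) v.length | get1 v i + 1 = maxVal v} := by
  obtain ⟨⟨hL1, hLn⟩, hLm⟩ := mem_Maxb.mp (lastMaxPos_mem h)
  ext i
  simp only [Maxa, mem_filter, mem_Icc, mem_Ioc]
  constructor
  · rintro ⟨⟨-, hin⟩, him, hafter⟩
    refine ⟨⟨lt_of_not_ge fun hiL => ?_, hin⟩, him⟩
    rcases hiL.eq_or_lt with rfl | hiL
    · omega
    · exact (hafter _ ⟨hiL, hLn⟩).ne hLm
  · rintro ⟨⟨hLi, hin⟩, him⟩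
    exact ⟨⟨by omega, hin⟩, him, fun j hj =>
      get1_lt_maxVal_of_lastMaxPos_lt (by omega) hj.2⟩

lemma card_filter_Maxa_lt (h : v ≠ []) {c : ℕ} (hc : lastMaxPos v ≤ c) :
    #{i ∈ Maxa v | c < i} = (v.drop c).countP (fun x => x + 1 = maxVal v) := by
  have : {i ∈ Maxa v | c < i} = {i ∈ Ioc c v.length | get1 v i + 1 = maxVal v} := by
    ext i; simp only [Maxa_eq h, mem_filter, mem_Ioc]; omega
  rw [this, card_filter_Ioc_get1 (· + 1 = maxVal v)]

lemma card_Maxa (h : v ≠ []) :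
    #(Maxa v) = (v.drop (lastMaxPos v)).countP (fun x => x + 1 = maxVal v) := by
  have hgt : ∀ i ∈ Maxa v, lastMaxPos v < i := fun i hi => by
    rw [Maxa_eq h, mem_filter, mem_Ioc] at hi
    exact hi.1.1
  rw [← card_filter_Maxa_lt h le_rfl, filter_true_of_mem hgt]

end lastMaxPos

section insertion

variable {v : List ℕ} {c : ℕ}

lemma card_Maxb_ins_of_maxVal_lt (hlt : maxVal v < insLetter v c) : #(Maxb (ins v c)) = 1 := by
  rw [card_Maxb, count_ins, maxVal_ins, max_eq_left hlt.le, if_pos rfl,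
    List.count_eq_zero.mpr fun hm => absurd (le_maxVal_of_mem hm) (not_le.mpr hlt)]

lemma card_Maxb_ins_of_eq_maxVal (he : insLetter v c = maxVal v) :
    #(Maxb (ins v c)) = #(Maxb v) + 1 := by
  rw [card_Maxb, card_Maxb, count_ins, maxVal_ins, he, max_self, if_pos rfl]

variable (hc : c ≤ v.length)
include hc

lemma lastMaxPos_ins_of_maxVal_lt (hlt : maxVal v < insLetter v c) :
    lastMaxPos (ins v c) = c + 1 := by
  have hmax : maxVal (ins v c) = insLetter v c := by rw [maxVal_ins]; omega
  apply lastMaxPos_eq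
  · exact mem_Maxb.mpr ⟨⟨by omega, by rw [length_ins]; omega⟩, by rw [get1_ins_succ hc, hmax]⟩
  · intro j hj _
    rw [get1_ins_of_lt hc hj, hmax]
    exact ((get1_le_maxVal v _).trans_lt hlt).ne

lemma lastMaxPos_ins_of_eq_maxVal (hv : v ≠ []) (he : insLetter v c = maxVal v) :
    lastMaxPos (ins v c) = max c (lastMaxPos v) + 1 := by
  have hmax : maxVal (ins v c) = maxVal v := by rw [maxVal_ins]; omega
  obtain ⟨⟨hL1, hLn⟩, hLm⟩ := mem_Maxb.mp (lastMaxPos_mem hv)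
  apply lastMaxPos_eq
  · refine mem_Maxb.mpr ⟨⟨by omega, by rw [length_ins]; omega⟩, ?_⟩
    rw [hmax]
    rcases le_or_gt (lastMaxPos v) c with hLc | hcL
    · rw [max_eq_left hLc, get1_ins_succ hc, he]
    · rw [max_eq_right hcL.le, get1_ins_of_lt hc (by omega), Nat.add_sub_cancel, hLm]
  · intro j hj hjn
    rw [length_ins] at hjn
    rw [get1_ins_of_lt hc (by omega), hmax]
    exact (get1_lt_maxVal_of_lastMaxPos_lt (by omega) (by omega)).ne

lemma card_Maxa_ins_of_maxVal_lt (he : insLetter v c = maxVal v + 1) :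
    #(Maxa (ins v c)) = (v.drop c).count (maxVal v) := by
  rw [card_Maxa (ins_ne_nil v c), lastMaxPos_ins_of_maxVal_lt hc (by omega), drop_ins hc le_rfl,
    maxVal_ins, he, max_eq_left (by omega), List.count_eq_countP]
  exact List.countP_congr fun x _ => by simp

lemma card_Maxa_ins_of_eq_maxVal (hv : v ≠ []) (he : insLetter v c = maxVal v) :
    #(Maxa (ins v c)) = (v.drop (max c (lastMaxPos v))).countP (fun x => x + 1 = maxVal v) := by
  rw [card_Maxa (ins_ne_nil v c), lastMaxPos_ins_of_eq_maxVal hc hv he,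
    drop_ins hc (le_max_left _ _), maxVal_ins, he, max_self]

end insertion

section admissiblePositions

variable {v : List ℕ}

lemma i0_mem (h : v ≠ []) : i0 v ∈ Maxb v ∧ (i0 v = 1 ∨ get1 v (i0 v - 1) ≠ maxVal v) := by
  set T := {i ∈ Icc 1 v.length | get1 v i = maxVal v ∧ (i = 1 ∨ get1 v (i - 1) ≠ maxVal v)}
  have hfirst : (Maxb v).min' (Maxb_nonempty h) ∈ T := by
    set i := (Maxb v).min' (Maxb_nonempty h)
    obtain ⟨⟨hi1, hin⟩, him⟩ := mem_Maxb.mp (min'_mem _ (Maxb_nonempty h))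
    refine mem_filter.mpr ⟨mem_Icc.mpr ⟨hi1, hin⟩, him, or_iff_not_imp_left.mpr fun hi => ?_⟩
    intro hprev
    have := min'_le _ _ (mem_Maxb.mpr ⟨⟨by omega, by omega⟩, hprev⟩)
    omega
  obtain ⟨j, hj, he⟩ := exists_mem_eq_sup T ⟨_, hfirst⟩ id
  rw [show i0 v = j from he]
  obtain ⟨hjI, hjm, hj1⟩ := mem_filter.mp hj
  exact ⟨mem_filter.mpr ⟨hjI, hjm⟩, hj1⟩

lemma insLetter_of_mem_Maxb {c : ℕ} (hc : c ∈ Maxb v) : insLetter v c = maxVal v + 1 := by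
  obtain ⟨⟨hc1, -⟩, hcm⟩ := mem_Maxb.mp hc
  rw [insLetter, if_neg (by omega), hcm]

lemma insLetter_of_mem_Maxa {c : ℕ} (hc : c ∈ Maxa v) : insLetter v c = maxVal v := by
  obtain ⟨hcI, hcm, -⟩ := mem_filter.mp hc
  rw [insLetter, if_neg (by have := (mem_Icc.mp hcI).1; omega), hcm]

lemma insLetter_i0_sub_one (hv : IsAreaSeq v) (h : v ≠ []) :
    insLetter v (i0 v - 1) = maxVal v := by
  obtain ⟨hmem, h1 | hprev⟩ := i0_mem h
  · have him := (mem_Maxb.mp hmem).2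
    rw [h1, hv.1 h] at him
    rw [h1, insLetter, if_pos rfl, him]
  · obtain ⟨⟨hi1, hin⟩, him⟩ := mem_Maxb.mp hmem
    -- `get1 v 0 = get1 v 1`, as `0 - 1 = 0` in `ℕ`
    have hi2 : 2 ≤ i0 v := by
      by_contra hlt
      rw [show i0 v = 1 by omega] at hprev him
      exact hprev him
    have hstep := hv.2 (i0 v - 1) (by omega) (by omega)
    rw [Nat.sub_add_cancel (by omega)] at hstep
    have := get1_le_maxVal v (i0 v - 1)
    rw [insLetter, if_neg (by omega)]
    omega

lemma card_Maxa_ins_of_mem_Maxb {c : ℕ} (hc : c ∈ Maxb v) :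
    #(Maxa (ins v c)) = #{i ∈ Maxb v | c < i} := by
  rw [card_Maxa_ins_of_maxVal_lt (mem_Maxb.mp hc).1.2 (insLetter_of_mem_Maxb hc),
    card_filter_Maxb_lt]

lemma card_Maxa_ins_of_mem_Maxa (h : v ≠ []) {c : ℕ} (hc : c ∈ Maxa v) :
    #(Maxa (ins v c)) = #{i ∈ Maxa v | c < i} := by
  have hc' := hc
  rw [Maxa_eq h, mem_filter, mem_Ioc] at hc'
  rw [card_Maxa_ins_of_eq_maxVal hc'.1.2 h (insLetter_of_mem_Maxa hc),
    max_eq_left hc'.1.1.le, card_filter_Maxa_lt h hc'.1.1.le]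

lemma card_Maxa_ins_i0_sub_one (hv : IsAreaSeq v) (h : v ≠ []) :
    #(Maxa (ins v (i0 v - 1))) = #(Maxa v) := by
  obtain ⟨⟨hi1, hin⟩, -⟩ := mem_Maxb.mp (i0_mem h).1
  have hiL : i0 v ≤ lastMaxPos v := le_lastMaxPos (i0_mem h).1
  rw [card_Maxa_ins_of_eq_maxVal (by omega) h (insLetter_i0_sub_one hv h),
    max_eq_right (by omega), card_Maxa h]

end admissiblePositions

lemma List.SortedGT.card_filter_getElem_lt {α : Type*} [LinearOrder α] {l : List α}
    (hl : l.SortedGT) {k : ℕ} (hk : k < l.length) : #{x ∈ l.toFinset | l[k] < x} = k := by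
  have : {x ∈ l.toFinset | l[k] < x} = (l.take k).toFinset := by
    ext x
    simp only [Finset.mem_filter, List.mem_toFinset, List.mem_iff_getElem, List.getElem_take,
      List.length_take]
    constructor
    · rintro ⟨⟨j, hj, rfl⟩, hlt⟩
      exact ⟨j, lt_min ((hl.getElem_lt_getElem_iff).mp hlt) hj, rfl⟩
    · rintro ⟨j, hj, rfl⟩
      exact ⟨⟨j, by omega, rfl⟩, (hl.getElem_lt_getElem_iff).mpr (by omega)⟩
  rw [this, List.toFinset_card_of_nodup (hl.nodup.sublist (List.take_sublist _ _)),
    List.length_take_of_le hk.le]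

lemma Finset.getD_sort_reverse_mem (S : Finset ℕ) {k : ℕ} (hk : k < #S) :
    (S.sort (· ≤ ·)).reverse.getD k 0 ∈ S := by
  rw [List.getD_eq_getElem _ _ (by simpa using hk)]
  exact (mem_sort _).mp (List.mem_reverse.mp (List.getElem_mem _))

lemma Finset.card_filter_getD_sort_reverse_lt (S : Finset ℕ) {k : ℕ} (hk : k < #S) :
    #{i ∈ S | (S.sort (· ≤ ·)).reverse.getD k 0 < i} = k := by
  set l := (S.sort (· ≤ ·)).reverse
  have hl : l.SortedGT := List.sortedGT_reverse.mpr (sortedLT_sort S)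
  have hS : l.toFinset = S := by simp [l]
  have hk' : k < l.length := by simpa [l] using hk
  rw [List.getD_eq_getElem _ _ hk']
  simpa only [hS] using hl.card_filter_getElem_lt hk'

section admissible

variable {v : List ℕ}

lemma le_length_of_mem_admissible {c : ℕ} (hc : c ∈ admissible v) : c ≤ v.length := by
  unfold admissible at hc
  split_ifs at hc with h
  · simp_all
  simp only [List.mem_append, List.mem_reverse, mem_sort, List.mem_singleton] at hc
  rcases hc with (hc | hc) | rfl
  · exact (mem_Maxb.mp hc).1.2
  · exact (mem_Icc.mp (mem_filter.mp hc).1).2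
  · have := (mem_Maxb.mp (i0_mem h).1).1.2
    omega

lemma admissible_getD_le_length (v : List ℕ) (a : ℕ) : (admissible v).getD a 0 ≤ v.length := by
  rw [List.getD_eq_getElem?_getD]
  cases hc : (admissible v)[a]? with
  | none => exact Nat.zero_le _
  | some c => exact le_length_of_mem_admissible (List.mem_of_getElem? hc)

lemma admissible_getD_of_lt_card_Maxb (h : v ≠ []) {a : ℕ} (ha : a < #(Maxb v)) :
    ∃ c ∈ Maxb v, (admissible v).getD a 0 = c ∧ #{i ∈ Maxb v | c < i} = a := by
  refine ⟨_, (Maxb v).getD_sort_reverse_mem ha, ?_,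
    (Maxb v).card_filter_getD_sort_reverse_lt ha⟩
  rw [admissible, if_neg h, List.append_assoc, List.getD_append _ _ _ _ (by simpa using ha)]

lemma admissible_getD_of_card_Maxb_le (h : v ≠ []) {a : ℕ} (ha : #(Maxb v) ≤ a)
    (ha' : a < #(Maxb v) + #(Maxa v)) :
    ∃ c ∈ Maxa v, (admissible v).getD a 0 = c ∧ #{i ∈ Maxa v | c < i} = a - #(Maxb v) := by
  have hk : a - #(Maxb v) < #(Maxa v) := by omega
  refine ⟨_, (Maxa v).getD_sort_reverse_mem hk, ?_,
    (Maxa v).card_filter_getD_sort_reverse_lt hk⟩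
  rw [admissible, if_neg h, List.append_assoc, List.getD_append_right _ _ _ _ (by simpa using ha),
    List.getD_append _ _ _ _ (by simp; omega)]
  simp

lemma admissible_getD_card_Maxb_add_card_Maxa (h : v ≠ []) :
    (admissible v).getD (#(Maxb v) + #(Maxa v)) 0 = i0 v - 1 := by
  rw [admissible, if_neg h, List.getD_append_right _ _ _ _ (by simp)]
  simp

end admissible

section step

variable {v : List ℕ} (h : v ≠ [])
include h

lemma card_Maxb_Maxa_ins_admissible_of_lt {a : ℕ} (ha : a < #(Maxb v)) :
    #(Maxb (ins v ((admissible v).getD a 0))) = 1 ∧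
      #(Maxa (ins v ((admissible v).getD a 0))) = a := by
  obtain ⟨c, hc, hget, hcard⟩ := admissible_getD_of_lt_card_Maxb h ha
  rw [hget, card_Maxa_ins_of_mem_Maxb hc, hcard,
    card_Maxb_ins_of_maxVal_lt (by rw [insLetter_of_mem_Maxb hc]; omega)]
  exact ⟨rfl, rfl⟩

lemma card_Maxb_Maxa_ins_admissible_of_le (hv : IsAreaSeq v) {a : ℕ} (ha : #(Maxb v) ≤ a)
    (ha' : a ≤ #(Maxb v) + #(Maxa v)) :
    #(Maxb (ins v ((admissible v).getD a 0))) = #(Maxb v) + 1 ∧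
      #(Maxa (ins v ((admissible v).getD a 0))) = a - #(Maxb v) := by
  rcases ha'.lt_or_eq with ha' | rfl
  · obtain ⟨c, hc, hget, hcard⟩ := admissible_getD_of_card_Maxb_le h ha ha'
    rw [hget, card_Maxa_ins_of_mem_Maxa h hc, hcard,
      card_Maxb_ins_of_eq_maxVal (insLetter_of_mem_Maxa hc)]
    exact ⟨rfl, rfl⟩
  · rw [admissible_getD_card_Maxb_add_card_Maxa h, card_Maxa_ins_i0_sub_one hv h,
      card_Maxb_ins_of_eq_maxVal (insLetter_i0_sub_one hv h)]
    omega

end step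

section appendSingleton

variable {u : List ℕ} {x : ℕ}

lemma get1_append_singleton_of_le {i : ℕ} (hi : 1 ≤ i) (hiu : i ≤ u.length) :
    get1 (u ++ [x]) i = get1 u i :=
  List.getD_append _ _ _ _ (by omega)

lemma get1_append_singleton_length_succ : get1 (u ++ [x]) (u.length + 1) = x := by
  simp [get1]

lemma IsAreaSeq.of_append_singleton (hw : IsAreaSeq (u ++ [x])) : IsAreaSeq u := by
  refine ⟨fun hu => ?_, fun i hi hiu => ?_⟩
  · rw [← get1_append_singleton_of_le le_rfl (List.length_pos_iff.mpr hu)]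
    exact hw.1 (by simp)
  · rw [← get1_append_singleton_of_le (x := x) (by omega) hiu,
      ← get1_append_singleton_of_le (x := x) hi hiu.le]
    exact hw.2 i hi (by simp; omega)

lemma IsAreaSeq.le_of_append_singleton (hw : IsAreaSeq (u ++ [x])) (hu : u ≠ []) :
    x ≤ get1 u u.length + 1 := by
  have hn := List.length_pos_iff.mpr hu
  have := hw.2 u.length hn (by simp)
  rwa [get1_append_singleton_length_succ, get1_append_singleton_of_le hn le_rfl] at this

lemma bseq_append_singleton_of_le {i : ℕ} (hi : i ≤ u.length) : bseq (u ++ [x]) i = bseq u i := by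
  induction i with
  | zero => rfl
  | succ i ih =>
    cases i with
    | zero => rfl
    | succ i =>
      simp only [bseq, ih (by omega), get1_append_singleton_of_le (x := x) (by omega) hi]

lemma bseq_append_singleton_length_succ (hu : u ≠ []) :
    bseq (u ++ [x]) (u.length + 1) =
      if bseq u u.length + 1 ≤ x then bseq u u.length + 1 else 0 := by
  obtain ⟨n, hn⟩ : ∃ n, u.length = n + 1 := Nat.exists_eq_succ_of_ne_zero (by simpa using hu)
  have hprev : bseq (u ++ [x]) (n + 1) = bseq u (n + 1) := bseq_append_singleton_of_le (by omega)
  have hlast : get1 (u ++ [x]) (n + 1 + 1) = x := hn ▸ get1_append_singleton_length_succ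
  rw [hn]
  simp only [bseq, hprev, hlast]

end appendSingleton

lemma psi_append_singleton (u : List ℕ) (x : ℕ) :
    psi (u ++ [x]) = ins (psi u) ((admissible (psi u)).getD x 0) := by
  simp [psi, psiRev]

lemma isAreaSeq_psi (w : List ℕ) : IsAreaSeq (psi w) := by
  unfold psi
  induction w.reverse with
  | nil => exact ⟨fun h => absurd rfl h, fun i _ hi => absurd hi (by simp [psiRev])⟩
  | cons a u ih => exact ih.ins (admissible_getD_le_length _ _)

lemma psi_ne_nil {w : List ℕ} (h : w ≠ []) : psi w ≠ [] := by
  rw [← List.dropLast_append_getLast h, psi_append_singleton]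
  exact ins_ne_nil _ _

theorem card_Maxb_Maxa_psi {w : List ℕ} (hw : IsAreaSeq w) (hne : w ≠ []) :
    #(Maxb (psi w)) = bseq w w.length + 1 ∧
      #(Maxa (psi w)) + bseq w w.length = get1 w w.length := by
  induction w using List.reverseRecOn with
  | nil => exact absurd rfl hne
  | append_singleton u x ih =>
    rcases eq_or_ne u [] with rfl | hu
    · obtain rfl : x = 0 := hw.1 (by simp)
      decide
    obtain ⟨hB, hA⟩ := ih hw.of_append_singleton hu
    have hx := hw.le_of_append_singleton hu
    rw [psi_append_singleton, List.length_append, List.length_singleton,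
      bseq_append_singleton_length_succ hu, get1_append_singleton_length_succ]
    rcases lt_or_ge x #(Maxb (psi u)) with hlt | hge
    · obtain ⟨h1, h2⟩ := card_Maxb_Maxa_ins_admissible_of_lt (psi_ne_nil hu) hlt
      rw [if_neg (by omega), h1, h2]
      exact ⟨rfl, rfl⟩
    · obtain ⟨h1, h2⟩ := card_Maxb_Maxa_ins_admissible_of_le (psi_ne_nil hu) (isAreaSeq_psi u) hge
        (by omega)
      rw [if_pos (by omega), h1, h2]
      omega

/-- For a nonempty area sequence `w` of size `n` with bounce sequence
`b_1 … b_n`, we have `|Maxa (ψ w)| = w_n - b_n`. -/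
theorem card_Maxa_psi (w : List ℕ) (hw : IsAreaSeq w) (hne : w ≠ []) :
    (Maxa (psi w)).card = get1 w w.length - bseq w w.length := by
  have := (card_Maxb_Maxa_psi hw hne).2
  omega
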